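/- arXiv:math/0410241 — 5 statements merged into one kernel-verified Lean document; each statement's English description precedes it below -/
import Mathlib

section
/- For all positive integers x, z, n with x < z, n divides φ(z^n − x^n), where φ is Euler's totient function. -/
private lemma step_lt {a b m : ℕ} (ha : 0 < a) (hab : a < b) (hm : 0 < m) :
    b ^ m - a ^ m < b ^ (m + 1) - a ^ (m + 1) := by
  have hX : 0 < a ^ m := Nat.pow_pos ha
  have hXY : a ^ m < b ^ m := Nat.pow_lt_pow_left hab hm.ne'
  have h1 : a * a ^ m + b ^ m ≤ b * b ^ m := by
    calc a * a ^ m + b ^ m ≤ a * b ^ m + b ^ m := by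
          have := Nat.mul_le_mul_left a hXY.le; omega
      _ = (a + 1) * b ^ m := by ring
      _ ≤ b * b ^ m := Nat.mul_le_mul_right _ (by omega)
  rw [pow_succ, pow_succ, mul_comm (b ^ m) b, mul_comm (a ^ m) a]
  omega

private lemma sub_pow_lt {a b : ℕ} (ha : 0 < a) (hab : a < b) :
    ∀ n k, 0 < k → k < n → b ^ k - a ^ k < b ^ n - a ^ n := by
  intro n
  induction n with
  | zero => intro k hk hkn; omega
  | succ m ih =>
    intro k hk hkn
    rcases Nat.lt_succ_iff_lt_or_eq.mp hkn with h | h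
    · have h1 := ih k hk h
      have hm : 0 < m := lt_trans hk h
      have h2 := step_lt ha hab hm
      omega
    · subst h; exact step_lt ha hab hk

private lemma cop_a {a b n : ℕ} (hab : Nat.Coprime a b) (hn : 0 < n) (hle : a ≤ b) :
    Nat.Coprime a (b ^ n - a ^ n) := by
  have h : a ^ n ≤ b ^ n := Nat.pow_le_pow_left hle n
  have h1 : Nat.Coprime a (b ^ n) := hab.pow_right n
  have hg := Nat.gcd_dvd_left a (b ^ n - a ^ n)
  have hg2 := Nat.gcd_dvd_right a (b ^ n - a ^ n)
  have hga : Nat.gcd a (b ^ n - a ^ n) ∣ a ^ n := hg.trans (dvd_pow_self a hn.ne')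
  have hgb : Nat.gcd a (b ^ n - a ^ n) ∣ b ^ n := by
    have h3 := Nat.dvd_add hg2 hga
    rwa [Nat.sub_add_cancel h] at h3
  exact Nat.eq_one_of_dvd_one (h1 ▸ Nat.dvd_gcd hg hgb)

private lemma cop_b {a b n : ℕ} (hab : Nat.Coprime a b) (hn : 0 < n) (hle : a ≤ b) :
    Nat.Coprime b (b ^ n - a ^ n) := by
  have h : a ^ n ≤ b ^ n := Nat.pow_le_pow_left hle n
  have h1 : Nat.Coprime b (a ^ n) := (hab.symm).pow_right n
  have hg := Nat.gcd_dvd_left b (b ^ n - a ^ n)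
  have hg2 := Nat.gcd_dvd_right b (b ^ n - a ^ n)
  have hgb : Nat.gcd b (b ^ n - a ^ n) ∣ b ^ n := hg.trans (dvd_pow_self b hn.ne')
  have hga : Nat.gcd b (b ^ n - a ^ n) ∣ a ^ n := by
    have h3 := Nat.dvd_sub hgb hg2
    rwa [show b ^ n - (b ^ n - a ^ n) = a ^ n by omega] at h3
  exact Nat.eq_one_of_dvd_one (h1 ▸ Nat.dvd_gcd hg hga)

private lemma key_coprime {a b n : ℕ} (ha : 0 < a) (hab : a < b) (hcop : Nat.Coprime a b)
    (hn : 0 < n) : n ∣ Nat.totient (b ^ n - a ^ n) := by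
  rcases Nat.lt_or_ge n 2 with h2 | h2
  · have : n = 1 := by omega
    subst this; exact one_dvd _
  set M := b ^ n - a ^ n with hM
  have hMlt : 1 < M := by
    have h1 : a ^ (n - 1) + 1 ≤ (a + 1) ^ (n - 1) :=
      Nat.pow_lt_pow_left (lt_add_one a) (by omega)
    have hb1 : (a + 1) ^ n ≤ b ^ n := Nat.pow_le_pow_left (by omega) n
    have heq : (a + 1) ^ n = (a + 1) ^ (n - 1) * (a + 1) := by
      rw [← pow_succ]; congr 1; omega
    have heq2 : a ^ n = a ^ (n - 1) * a := by rw [← pow_succ]; congr 1; omega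
    have hX : 1 ≤ a ^ (n - 1) := Nat.one_le_pow _ _ ha
    have : a ^ n + 2 ≤ (a + 1) ^ n := by
      rw [heq, heq2]; nlinarith
    omega
  haveI : NeZero M := ⟨by omega⟩
  have hca : Nat.Coprime a M := cop_a hcop hn hab.le
  have hcb : Nat.Coprime b M := cop_b hcop hn hab.le
  set ua := ZMod.unitOfCoprime a hca with hua
  set ub := ZMod.unitOfCoprime b hcb with hub
  have hpow_eq : ∀ k : ℕ, ub ^ k = ua ^ k ↔ ((b ^ k : ℕ) : ZMod M) = ((a ^ k : ℕ) : ZMod M) := by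
    intro k
    rw [Units.ext_iff]
    push_cast
    simp [hua, hub, ZMod.coe_unitOfCoprime]
  have hord : orderOf (ub * ua⁻¹) = n := by
    rw [orderOf_eq_iff hn]
    constructor
    · rw [mul_pow, inv_pow]
      have : ub ^ n = ua ^ n := by
        rw [hpow_eq]
        rw [ZMod.natCast_eq_natCast_iff]
        symm
        rw [Nat.modEq_iff_dvd' (le_of_lt (Nat.pow_lt_pow_left hab hn.ne'))]
      rw [this, mul_inv_cancel]
    · intro m hmn hm hcontra
      rw [mul_pow, inv_pow, mul_inv_eq_one] at hcontra
      rw [hpow_eq, ZMod.natCast_eq_natCast_iff] at hcontra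
      have hdvd : M ∣ b ^ m - a ^ m := by
        rw [← Nat.modEq_iff_dvd' (le_of_lt (Nat.pow_lt_pow_left hab hm.ne'))]
        exact hcontra.symm
      have hpos : 0 < b ^ m - a ^ m := by
        have := Nat.pow_lt_pow_left hab hm.ne'; omega
      have hlt : b ^ m - a ^ m < M := sub_pow_lt ha hab n m hm hmn
      have := Nat.le_of_dvd hpos hdvd
      omega
  calc n = orderOf (ub * ua⁻¹) := hord.symm
    _ ∣ Fintype.card (ZMod M)ˣ := orderOf_dvd_card
    _ = Nat.totient M := ZMod.card_units_eq_totient M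

theorem totient_pow_sub_pow_dvd (x z n : ℕ) (hx : 0 < x) (hn : 0 < n) (hxz : x < z) :
    n ∣ Nat.totient (z ^ n - x ^ n) := by
  set d := Nat.gcd x z with hd
  have hdpos : 0 < d := Nat.gcd_pos_of_pos_left z hx
  set a := x / d with ha
  set b := z / d with hb
  have hxa : x = d * a := (Nat.mul_div_cancel' (Nat.gcd_dvd_left x z)).symm
  have hzb : z = d * b := (Nat.mul_div_cancel' (Nat.gcd_dvd_right x z)).symm
  have hcop : Nat.Coprime a b := Nat.coprime_div_gcd_div_gcd hdpos
  have hapos : 0 < a := by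
    rcases Nat.eq_zero_or_pos a with h | h
    · rw [h, mul_zero] at hxa; omega
    · exact h
  have haltb : a < b := by
    by_contra hge
    push_neg at hge
    have : z ≤ x := by
      rw [hxa, hzb]; exact Nat.mul_le_mul_left d hge
    omega
  have hkey := key_coprime hapos haltb hcop hn
  have hdvd : (b ^ n - a ^ n) ∣ (z ^ n - x ^ n) := by
    have : z ^ n - x ^ n = d ^ n * (b ^ n - a ^ n) := by
      rw [hxa, hzb, mul_pow, mul_pow, Nat.mul_sub]
    rw [this]
    exact dvd_mul_left _ _
  exact hkey.trans (Nat.totient_dvd_of_dvd hdvd)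
end

section
/- For all positive integers x, z, n with x < z, n divides φ((z^n − x^n)/(z − x)), where φ is Euler's totient function. -/
/-!
Write `x = a g`, `z = b g` with `a, b` coprime. The quotient `Q = (b^n - a^n)/(b - a)` divides
the one for `x, z`, and `φ` preserves divisibility, so it suffices to show `n ∣ φ Q`.
Now `Q` is coprime to `a` and `b`, and `b/a` has order exactly `n` in `(ℤ/Q)ˣ`:
`b^n ≡ a^n mod Q`, while for `0 < d < n` we have `0 < b^d - a^d < b^(n-1) ≤ Q`.
Hence `n` divides `#(ℤ/Q)ˣ = φ Q`.
-/

open Finset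

theorem IsCoprime.isCoprime_pow_sub_pow {R : Type*} [CommRing R] {x y : R} (h : IsCoprime x y)
    {n : ℕ} (hn : n ≠ 0) : IsCoprime x (x ^ n - y ^ n) := by
  obtain ⟨k, rfl⟩ := Nat.exists_eq_add_one_of_ne_zero hn
  convert (h.pow_right (n := k + 1)).neg_right.add_mul_left_right (x ^ k) using 1
  ring

theorem ZMod.unitOfCoprime_pow_eq_pow_iff {m a b : ℕ} (ha : a.Coprime m) (hb : b.Coprime m)
    (d : ℕ) : unitOfCoprime b hb ^ d = unitOfCoprime a ha ^ d ↔ b ^ d ≡ a ^ d [MOD m] := by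
  rw [← ZMod.natCast_eq_natCast_iff, Units.ext_iff]
  push_cast [Units.val_pow_eq_pow_val, coe_unitOfCoprime]
  rfl

namespace Nat

theorem Coprime.coprime_pow_sub_pow {a b n : ℕ} (h : a.Coprime b) (hab : a ≤ b) (hn : n ≠ 0) :
    a.Coprime (b ^ n - a ^ n) ∧ b.Coprime (b ^ n - a ^ n) := by
  simp only [← Nat.isCoprime_iff_coprime, Nat.cast_sub (Nat.pow_le_pow_left hab n), Nat.cast_pow]
  have hab' := Nat.isCoprime_iff_coprime.mpr h
  exact ⟨by simpa [neg_sub] using (hab'.isCoprime_pow_sub_pow hn).neg_right,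
    hab'.symm.isCoprime_pow_sub_pow hn⟩

theorem pow_sub_pow_div_sub_eq_geom_sum₂ {a b : ℕ} (hab : a < b) (n : ℕ) :
    (b ^ n - a ^ n) / (b - a) = ∑ i ∈ range n, a ^ i * b ^ (n - 1 - i) :=
  Nat.div_eq_of_eq_mul_left (Nat.sub_pos_of_lt hab) (geom_sum₂_mul_of_le hab.le n).symm

theorem pow_pred_le_pow_sub_pow_div_sub {a b n : ℕ} (hab : a < b) (hn : 0 < n) :
    b ^ (n - 1) ≤ (b ^ n - a ^ n) / (b - a) := by
  rw [pow_sub_pow_div_sub_eq_geom_sum₂ hab]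
  simpa using single_le_sum (fun i _ => Nat.zero_le (a ^ i * b ^ (n - 1 - i))) (mem_range.mpr hn)

theorem pow_sub_pow_div_sub_dvd_mul_right (a b g : ℕ) {n : ℕ} (hn : n ≠ 0) :
    (b ^ n - a ^ n) / (b - a) ∣ ((b * g) ^ n - (a * g) ^ n) / (b * g - a * g) := by
  rw [mul_pow, mul_pow, ← Nat.sub_mul, ← Nat.sub_mul,
    Nat.mul_div_mul_comm (Nat.sub_dvd_pow_sub_pow b a n) (dvd_pow_self g hn)]
  exact Dvd.intro _ rfl

theorem dvd_totient_of_pow_modEq_pow {m a b n : ℕ} [NeZero m] (ha : a.Coprime m)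
    (hb : b.Coprime m) (hn : 0 < n) (hmod : b ^ n ≡ a ^ n [MOD m])
    (hmin : ∀ d < n, 0 < d → ¬ b ^ d ≡ a ^ d [MOD m]) : n ∣ φ m := by
  set u := ZMod.unitOfCoprime b hb * (ZMod.unitOfCoprime a ha)⁻¹
  have hu (d : ℕ) : u ^ d = 1 ↔ b ^ d ≡ a ^ d [MOD m] := by
    rw [mul_pow, inv_pow, mul_inv_eq_one, ZMod.unitOfCoprime_pow_eq_pow_iff]
  have hord : orderOf u = n :=
    (orderOf_eq_iff hn).mpr ⟨(hu n).mpr hmod, fun d hdn hd => mt (hu d).mp (hmin d hdn hd)⟩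
  rw [← hord, ← ZMod.card_units_eq_totient]
  exact orderOf_dvd_card

theorem dvd_totient_pow_sub_pow_div_sub_of_coprime {a b n : ℕ} (ha : 0 < a) (hab : a < b)
    (hco : a.Coprime b) (hn : 0 < n) : n ∣ φ ((b ^ n - a ^ n) / (b - a)) := by
  set Q := (b ^ n - a ^ n) / (b - a)
  have hQ : Q ∣ b ^ n - a ^ n := Nat.div_dvd_of_dvd (Nat.sub_dvd_pow_sub_pow b a n)
  have hQpos : 0 < Q := (pow_pos (ha.trans hab) _).trans_le
    (pow_pred_le_pow_sub_pow_div_sub hab hn)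
  have hlt (d : ℕ) (hdn : d < n) : b ^ d - a ^ d < Q := calc
    b ^ d - a ^ d < b ^ d := Nat.sub_lt (pow_pos (ha.trans hab) _) (pow_pos ha _)
    _ ≤ b ^ (n - 1) := Nat.pow_le_pow_right (ha.trans hab) (by omega)
    _ ≤ Q := pow_pred_le_pow_sub_pow_div_sub hab hn
  obtain ⟨haQ, hbQ⟩ := hco.coprime_pow_sub_pow hab.le hn.ne'
  have : NeZero Q := ⟨hQpos.ne'⟩
  refine dvd_totient_of_pow_modEq_pow (haQ.coprime_dvd_right hQ) (hbQ.coprime_dvd_right hQ) hn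
    ((Nat.modEq_iff_dvd' (Nat.pow_le_pow_left hab.le n)).mpr hQ).symm fun d hdn hd hmod => ?_
  have hdvd := (Nat.modEq_iff_dvd' (Nat.pow_le_pow_left hab.le d)).mp hmod.symm
  exact (hlt d hdn).not_ge (Nat.le_of_dvd (Nat.sub_pos_of_lt (Nat.pow_lt_pow_left hab hd.ne')) hdvd)

end Nat

theorem totient_pow_sub_pow_div_dvd (x z n : ℕ) (hx : 0 < x) (hn : 0 < n) (hxz : x < z) :
    n ∣ Nat.totient ((z ^ n - x ^ n) / (z - x)) := by
  obtain ⟨g, a, b, -, hco, rfl, rfl⟩ := Nat.exists_coprime' (Nat.gcd_pos_of_pos_left z hx)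
  have ha : 0 < a := Nat.pos_of_mul_pos_right hx
  have hab : a < b := Nat.lt_of_mul_lt_mul_right hxz
  exact (Nat.dvd_totient_pow_sub_pow_div_sub_of_coprime ha hab hco hn).trans
    (Nat.totient_dvd_of_dvd (Nat.pow_sub_pow_div_sub_dvd_mul_right a b g hn.ne'))
end

section
/- For every integer b ≥ 2 and positive integer n, n divides φ((b^n − 1)/(b − 1)), the Euler totient of the base-b repunit of length n. -/
/-! The multiplicative order of `b` modulo the repunit `R = (b^n - 1)/(b - 1)` is exactly `n`:
`R ∣ b^n - 1`, while `R ≥ b^(n-1) > b^d - 1 > 0` for `0 < d < n`, so `R` cannot divide `b^d - 1`.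
Since `b` is a unit modulo `R`, its order divides `|(ZMod R)ˣ| = φ R`. -/

open Nat

theorem ZMod.orderOf_dvd_totient {m : ℕ} {x : ZMod m} (hx : IsUnit x) : orderOf x ∣ φ m :=
  orderOf_dvd_of_pow_eq_one <| by
    rw [← hx.unit_spec, ← Units.val_pow_eq_pow_val, ZMod.pow_totient, Units.val_one]

theorem ZMod.natCast_pow_eq_one_iff_dvd {m b k : ℕ} (hb : 0 < b) :
    (b : ZMod m) ^ k = 1 ↔ m ∣ b ^ k - 1 := by
  rw [← Nat.cast_pow, ← Nat.cast_one, ZMod.natCast_eq_natCast_iff, Nat.ModEq.comm,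
    Nat.modEq_iff_dvd' (Nat.one_le_pow _ _ hb)]

theorem ZMod.orderOf_natCast_eq_of_dvd_pow_sub_one {m b n : ℕ} (hb : 1 < b) (hn : 0 < n)
    (hdvd : m ∣ b ^ n - 1) (hle : b ^ (n - 1) ≤ m) : orderOf (b : ZMod m) = n := by
  refine (orderOf_eq_iff hn).2 ⟨(natCast_pow_eq_one_iff_dvd (by omega)).2 hdvd, ?_⟩
  intro d hdn hd hpow
  have hdvd_d : m ∣ b ^ d - 1 := (natCast_pow_eq_one_iff_dvd (by omega)).1 hpow
  have hone_lt : 1 < b ^ d := Nat.one_lt_pow hd.ne' hb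
  have hpow_le : b ^ d ≤ b ^ (n - 1) := Nat.pow_le_pow_right (by omega) (by omega)
  have := Nat.le_of_dvd (by omega) hdvd_d
  omega

theorem Nat.pow_pred_le_repunit {b n : ℕ} (hb : 2 ≤ b) (hn : 0 < n) :
    b ^ (n - 1) ≤ (b ^ n - 1) / (b - 1) := by
  rw [← Nat.geomSum_eq hb]
  exact Finset.single_le_sum (fun _ _ ↦ Nat.zero_le _) (Finset.mem_range.2 (by omega))

theorem totient_repunit (b n : ℕ) (hb : 2 ≤ b) (hn : 0 < n) :
    n ∣ Nat.totient ((b ^ n - 1) / (b - 1)) := by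
  set R := (b ^ n - 1) / (b - 1)
  have hR : R ∣ b ^ n - 1 := Nat.div_dvd_of_dvd (by simpa using Nat.sub_dvd_pow_sub_pow b 1 n)
  have hpow : (b : ZMod R) ^ n = 1 := (ZMod.natCast_pow_eq_one_iff_dvd (by omega)).2 hR
  rw [← ZMod.orderOf_natCast_eq_of_dvd_pow_sub_one hb hn hR (Nat.pow_pred_le_repunit hb hn)]
  exact ZMod.orderOf_dvd_totient (IsUnit.of_pow_eq_one hpow hn.ne')
end

section
/- Let x, y, n be positive integers with gcd(x, y) = 1 and let N = x^n + y^n with N > 2. Then the element y·x^{-1} has order exactly 2n in the multiplicative group (ℤ/Nℤ)*. -/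
/-!
Modulo `N = x ^ n + y ^ n` we have `y ^ n ≡ -x ^ n`, so `u = y / x` satisfies `u ^ n = -1 ≠ 1`.
Hence the order of `u` is `2 * g` for some divisor `g` of `n` with `u ^ g = -1`, which means
`N ∣ x ^ g + y ^ g`. Since `g ↦ x ^ g + y ^ g` is strictly increasing, this forces `g = n`.
-/

theorem Nat.Coprime.coprime_pow_add_pow {x y n : ℕ} (h : x.Coprime y) (hn : n ≠ 0) :
    x.Coprime (x ^ n + y ^ n) := by
  rw [← Nat.coprime_pow_left_iff (Nat.pos_of_ne_zero hn), add_comm, Nat.coprime_add_self_right]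
  exact h.pow n n

theorem strictMono_pow_add_pow {x y : ℕ} (hx : 0 < x) (hy : 0 < y) (hxy : 1 < x ∨ 1 < y) :
    StrictMono fun n : ℕ => x ^ n + y ^ n := by
  intro m n hmn
  rcases hxy with hx1 | hy1
  · exact add_lt_add_of_lt_of_le (Nat.pow_lt_pow_right hx1 hmn) (Nat.pow_le_pow_right hy hmn.le)
  · exact add_lt_add_of_le_of_lt (Nat.pow_le_pow_right hx hmn.le) (Nat.pow_lt_pow_right hy1 hmn)

theorem ZMod.natCast_mul_inv_pow_eq_neg_one_iff {N x y m : ℕ} (hx : x.Coprime N) :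
    ((y : ZMod N) * (x : ZMod N)⁻¹) ^ m = -1 ↔ N ∣ x ^ m + y ^ m := by
  have hinv : (x : ZMod N) * (x : ZMod N)⁻¹ = 1 := ZMod.coe_mul_inv_eq_one x hx
  have hunit : IsUnit ((x : ZMod N) ^ m) := ((ZMod.isUnit_iff_coprime x N).mpr hx).pow m
  rw [← ZMod.natCast_eq_zero_iff, ← hunit.mul_left_inj, mul_pow, mul_assoc, ← mul_pow,
    mul_comm _ (x : ZMod N), hinv, one_pow, mul_one, neg_one_mul, eq_neg_iff_add_eq_zero,
    add_comm]
  norm_cast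

theorem exists_orderOf_eq_two_mul {G : Type*} [Monoid G] {a z : G} {n : ℕ} (hz : orderOf z = 2)
    (han : a ^ n = z) : ∃ g, g ∣ n ∧ orderOf a = 2 * g ∧ a ^ g = z := by
  have hz1 : z ≠ 1 := by rintro rfl; simp at hz
  have hn : n ≠ 0 := by rintro rfl; exact hz1 (pow_zero a ▸ han).symm
  set g := (orderOf a).gcd n
  have hd : orderOf a = 2 * g := by
    have hdiv := orderOf_pow' a hn
    rw [han, hz] at hdiv
    rw [Nat.eq_mul_of_div_eq_right (Nat.gcd_dvd_left _ n) hdiv.symm, mul_comm]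
  obtain ⟨s, hs⟩ : g ∣ n := Nat.gcd_dvd_right _ n
  have hs_odd : Odd s := by
    rw [← Nat.not_even_iff_odd]
    rintro ⟨k, rfl⟩
    apply hz1
    rw [← han, hs, ← two_mul, ← mul_assoc, mul_comm g, ← hd, pow_mul, pow_orderOf_eq_one, one_pow]
  refine ⟨g, ⟨s, hs⟩, hd, ?_⟩
  obtain ⟨k, rfl⟩ := hs_odd
  rw [← han, hs, mul_add, mul_one, pow_add, mul_left_comm, ← mul_assoc, ← hd, pow_mul,
    pow_orderOf_eq_one, one_pow, one_mul]

theorem ZMod.orderOf_units_neg_one {N : ℕ} (hN : 2 < N) : orderOf (-1 : (ZMod N)ˣ) = 2 := by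
  have : Fact (2 < N) := ⟨hN⟩
  refine orderOf_eq_prime (by simp) fun h => ZMod.neg_one_ne_one (n := N) ?_
  simpa using congrArg Units.val h

theorem orderOf_div_eq_two_mul (x y n : ℕ) (hx : 0 < x) (hy : 0 < y) (hn : 0 < n)
    (hcop : Nat.gcd x y = 1) (hN : 2 < x ^ n + y ^ n)
    (u : (ZMod (x ^ n + y ^ n))ˣ)
    (hu : (u : ZMod (x ^ n + y ^ n)) = (y : ZMod (x ^ n + y ^ n)) * (x : ZMod (x ^ n + y ^ n))⁻¹) :
    orderOf u = 2 * n := by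
  have hxN : x.Coprime (x ^ n + y ^ n) := Nat.Coprime.coprime_pow_add_pow hcop hn.ne'
  have hpow_eq_neg_one (m : ℕ) : u ^ m = -1 ↔ x ^ n + y ^ n ∣ x ^ m + y ^ m := by
    rw [Units.ext_iff, Units.val_pow_eq_pow_val, hu, Units.val_neg, Units.val_one,
      ZMod.natCast_mul_inv_pow_eq_neg_one_iff hxN]
  obtain ⟨g, hgn, hord, hug⟩ := exists_orderOf_eq_two_mul (ZMod.orderOf_units_neg_one hN)
    ((hpow_eq_neg_one n).mpr dvd_rfl)
  have hxy : 1 < x ∨ 1 < y := by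
    by_contra! h
    obtain ⟨rfl, rfl⟩ : x = 1 ∧ y = 1 := by omega
    simp at hN
  have hng : n ≤ g := (strictMono_pow_add_pow hx hy hxy).le_iff_le.mp <|
    Nat.le_of_dvd (by positivity) ((hpow_eq_neg_one g).mp hug)
  rw [hord, le_antisymm (Nat.le_of_dvd hn hgn) hng]
end

section
/- For every positive integer n ≥ 2, the Mersenne number 2^n − 1 divisible by a prime p ≡ 1 (mod n) whenever n ≠ 6; in particular for n ≠ 6, there exists a prime p with p ≡ 1 (mod n) and p dividing 2^n − 1. -/
/-!
If a prime `p ∣ Φₙ(2)` does not divide `n`, then `2` has order exactly `n` modulo `p`, so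
`p ≡ 1 [MOD n]`, and `p ∣ 2ⁿ - 1`. Suppose every prime factor `p` of `Φₙ(2)` divides `n`. Then `2`
has order `m = ordCompl[p] n ≥ 2` modulo `p`, so `m ∣ p - 1`; hence `p` is the largest prime factor
of `n`, and by lifting the exponent `p² ∤ Φₙ(2)`, so `Φₙ(2) = p`. On the other hand, writing
`n = m p^(j+1)` and `y = 2^(p^j)`, we have `Φₙ(2) = Φ_{mp}(y)` and
`Φ_m(y^p) = Φ_{mp}(y) Φ_m(y)`; with `(y^p - 1)^φ(m) < Φ_m(y^p)` and `Φ_m(y) ≤ (y + 1)^φ(m)` this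
gives `Φₙ(2) > p` as soon as `p (y + 1) ≤ y^p - 1`, which fails only for `y = 2`, `p = 3`, i.e.
`n = 6`.
-/

open Polynomial Finset

namespace Nat

theorem ordCompl_dvd_div_of_dvd {p n : ℕ} (hp : p.Prime) (hpn : p ∣ n) (hn : n ≠ 0) :
    ordCompl[p] n ∣ n / p :=
  Nat.dvd_div_of_mul_dvd <| Nat.Coprime.mul_dvd_of_dvd_of_dvd
    (hp.coprime_iff_not_dvd.2 (Nat.not_dvd_ordCompl hp hn)) hpn (Nat.ordCompl_dvd n p)

theorem three_mul_lt_two_pow {k : ℕ} (hk : 5 ≤ k) : 3 * k < 2 ^ k := by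
  induction k, hk using Nat.le_induction with
  | base => norm_num
  | succ k hk ih => rw [pow_succ]; omega

end Nat

namespace Polynomial

theorem cyclotomic_dvd_geom_sum_X_pow {R : Type*} [CommRing R] [IsDomain R] {d n : ℕ}
    (hd : d ∈ n.properDivisors) : cyclotomic n R ∣ ∑ i ∈ range (n / d), (X ^ d) ^ i := by
  have hd0 : 0 < d := Nat.pos_of_mem_properDivisors hd
  have hne : (X ^ d - 1 : R[X]) ≠ 0 := X_pow_sub_C_ne_zero hd0 1
  rw [← mul_dvd_mul_iff_left hne, mul_comm _ (∑ i ∈ range _, _), geom_sum_mul, ← pow_mul,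
    Nat.mul_div_cancel' (Nat.mem_properDivisors.1 hd).1]
  exact X_pow_sub_one_mul_cyclotomic_dvd_X_pow_sub_one_of_dvd R hd

theorem cyclotomic_mul_prime_pow_eq_expand {p n : ℕ} (hp : p.Prime) (hpn : p ∣ n) (R : Type*)
    [CommRing R] (j : ℕ) : cyclotomic (n * p ^ j) R = expand R (p ^ j) (cyclotomic n R) := by
  induction j with
  | zero => simp
  | succ j ih =>
    rw [pow_succ, ← mul_assoc, ← cyclotomic_expand_eq_cyclotomic hp (hpn.mul_right _), ih,
      mul_comm, expand_mul]

end Polynomial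

section

variable {p n : ℕ} {a : ℤ}

theorem isPrimitiveRoot_ordCompl_of_dvd_eval_cyclotomic [Fact p.Prime] (hn : n ≠ 0)
    (h : (p : ℤ) ∣ (cyclotomic n ℤ).eval a) : IsPrimitiveRoot (a : ZMod p) (ordCompl[p] n) := by
  have : NeZero ((ordCompl[p] n : ℕ) : ZMod p) :=
    ⟨mt (ZMod.natCast_eq_zero_iff _ _).1 (Nat.not_dvd_ordCompl Fact.out hn)⟩
  rw [← isRoot_cyclotomic_prime_pow_mul_iff_of_charP (k := n.factorization p),
    Nat.ordProj_mul_ordCompl_eq_self, IsRoot, ← eq_intCast (Int.castRingHom _),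
    cyclotomic.eval_apply, eq_intCast, ZMod.intCast_zmod_eq_zero_iff_dvd]
  exact h

theorem ordCompl_dvd_sub_one_of_dvd_eval_cyclotomic (hp : p.Prime) (hn : n ≠ 0)
    (h : (p : ℤ) ∣ (cyclotomic n ℤ).eval a) : ordCompl[p] n ∣ p - 1 := by
  have := Fact.mk hp
  have hprim := isPrimitiveRoot_ordCompl_of_dvd_eval_cyclotomic hn h
  rw [hprim.eq_orderOf]
  exact ZMod.orderOf_dvd_card_sub_one (hprim.ne_zero (Nat.ordCompl_pos p hn).ne')

theorem lt_of_dvd_of_dvd_eval_cyclotomic {q : ℕ} (hp : p.Prime) (hq : q.Prime) (hqn : q ∣ n)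
    (hqp : q ≠ p) (hn : n ≠ 0) (h : (p : ℤ) ∣ (cyclotomic n ℤ).eval a) : q < p := by
  have hq_dvd : q ∣ ordCompl[p] n :=
    Nat.dvd_ordCompl_of_dvd_not_dvd hqn (mt (Nat.prime_dvd_prime_iff_eq hp hq).1 hqp.symm)
  have := Nat.le_of_dvd (by have := hp.two_le; omega)
    (hq_dvd.trans (ordCompl_dvd_sub_one_of_dvd_eval_cyclotomic hp hn h))
  omega

theorem not_sq_dvd_eval_cyclotomic (hp : p.Prime) (hodd : Odd p) (hpn : p ∣ n) (hn : n ≠ 0)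
    (h : (p : ℤ) ∣ (cyclotomic n ℤ).eval a) : ¬(p : ℤ) ^ 2 ∣ (cyclotomic n ℤ).eval a := by
  have := Fact.mk hp
  have hd : n / p ∈ n.properDivisors :=
    Nat.mem_properDivisors.2 ⟨Nat.div_dvd_of_dvd hpn, Nat.div_lt_self (by omega) hp.one_lt⟩
  have hdvd_sum : (cyclotomic n ℤ).eval a ∣ ∑ i ∈ range p, (a ^ (n / p)) ^ i := by
    simpa [Nat.div_div_self hpn hn, eval_finsetSum] using
      eval_dvd (x := a) (cyclotomic_dvd_geom_sum_X_pow (R := ℤ) hd)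
  have hsub : (p : ℤ) ∣ a ^ (n / p) - 1 := by
    obtain ⟨c, hc⟩ := Nat.ordCompl_dvd_div_of_dvd hp hpn hn
    rw [← ZMod.intCast_eq_intCast_iff_dvd_sub, hc]
    push_cast
    rw [pow_mul, (isPrimitiveRoot_ordCompl_of_dvd_eval_cyclotomic hn h).pow_eq_one, one_pow]
  have hndvd : ¬(p : ℤ) ∣ a ^ (n / p) := fun hdvd =>
    hp.not_dvd_one (Int.natCast_dvd_natCast.1 (by simpa using dvd_sub hdvd hsub))
  have hmult := emultiplicity_geom_sum₂_eq_one (Nat.prime_iff_prime_int.1 hp) hodd hsub hndvd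
  simp only [one_pow, mul_one] at hmult
  intro hsq
  have := (pow_dvd_iff_le_emultiplicity.1 (hsq.trans hdvd_sum)).trans_eq hmult
  norm_num at this

theorem prime_lt_eval_cyclotomic_mul {m : ℕ} (hp : p.Prime) (hpm : ¬p ∣ m) (hm : 2 ≤ m) {y : ℤ}
    (hy : 1 < y) (hyp : p * (y + 1) ≤ y ^ p - 1) : (p : ℤ) < (cyclotomic (m * p) ℤ).eval y := by
  suffices (p : ℝ) < (cyclotomic (m * p) ℝ).eval (y : ℝ) by
    rw [← eq_intCast (Int.castRingHom ℝ), cyclotomic.eval_apply, eq_intCast] at this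
    exact_mod_cast this
  have hy' : (1 : ℝ) < y := by exact_mod_cast hy
  have hyp' : (p : ℝ) * (y + 1) ≤ (y : ℝ) ^ p - 1 := by exact_mod_cast hyp
  have hexpand : (cyclotomic m ℝ).eval ((y : ℝ) ^ p) =
      (cyclotomic (m * p) ℝ).eval (y : ℝ) * (cyclotomic m ℝ).eval (y : ℝ) := by
    simpa using congrArg (eval (y : ℝ)) (cyclotomic_expand_eq_cyclotomic_mul hp hpm ℝ)
  have hφ : m.totient ≠ 0 := (Nat.totient_pos.2 (by omega)).ne'
  by_contra! hle
  have := calc ((y : ℝ) ^ p - 1) ^ m.totient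
      < (cyclotomic m ℝ).eval ((y : ℝ) ^ p) :=
        sub_one_pow_totient_lt_cyclotomic_eval hm (one_lt_pow₀ hy' hp.ne_zero)
    _ ≤ p * ((y : ℝ) + 1) ^ m.totient := by
        rw [hexpand]
        exact mul_le_mul hle (cyclotomic_eval_le_add_one_pow_totient hy' m)
          (cyclotomic_pos' m hy').le (Nat.cast_nonneg p)
    _ ≤ (p : ℝ) ^ m.totient * ((y : ℝ) + 1) ^ m.totient := by
        gcongr
        exact le_self_pow₀ (by exact_mod_cast hp.one_le) hφ
    _ ≤ ((y : ℝ) ^ p - 1) ^ m.totient := by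
        rw [← mul_pow]
        gcongr
  exact lt_irrefl _ this

theorem prime_lt_eval_two_cyclotomic (hp : p.Prime) (hpn : p ∣ n) (hn : n ≠ 0) (hn6 : n ≠ 6)
    (h : (p : ℤ) ∣ (cyclotomic n ℤ).eval 2) : (p : ℤ) < (cyclotomic n ℤ).eval 2 := by
  have := Fact.mk hp
  have hprim : IsPrimitiveRoot ((2 : ℤ) : ZMod p) (ordCompl[p] n) :=
    isPrimitiveRoot_ordCompl_of_dvd_eval_cyclotomic hn h
  have hm1 : ordCompl[p] n ≠ 1 := by
    rintro hm1
    rw [hm1, IsPrimitiveRoot.one_right_iff, ← Int.cast_one,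
      ZMod.intCast_eq_intCast_iff_dvd_sub] at hprim
    exact hp.not_dvd_one (Int.natCast_dvd_natCast.1 (by simpa using hprim))
  have hm2 : 2 ≤ ordCompl[p] n := Nat.two_le_iff _ |>.2 ⟨(Nat.ordCompl_pos p hn).ne', hm1⟩
  have hmp : ordCompl[p] n < p := by
    have := Nat.le_of_dvd (Nat.sub_pos_of_lt hp.one_lt)
      (ordCompl_dvd_sub_one_of_dvd_eval_cyclotomic hp hn h)
    omega
  obtain ⟨j, hj⟩ : ∃ j, n.factorization p = j + 1 :=
    Nat.exists_eq_add_one.2 (hp.factorization_pos_of_dvd hn hpn)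
  have hn_eq : n = ordCompl[p] n * p * p ^ j := calc
    n = p ^ n.factorization p * ordCompl[p] n := (Nat.ordProj_mul_ordCompl_eq_self n p).symm
    _ = ordCompl[p] n * p * p ^ j := by rw [hj]; ring
  rw [hn_eq, cyclotomic_mul_prime_pow_eq_expand hp (dvd_mul_left p _), expand_eval]
  refine prime_lt_eval_cyclotomic_mul hp (Nat.not_dvd_ordCompl hp hn) hm2
    (one_lt_pow₀ (by norm_num) (pow_ne_zero _ hp.ne_zero)) ?_
  rcases j with _ | j
  -- here `p = 3` would force `ordCompl[p] n = 2`, i.e. `n = 6`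
  · have hp5 : 5 ≤ p := by
      rw [pow_zero, mul_one] at hn_eq
      by_contra! hp5
      interval_cases p <;> first | omega | exact absurd hp (by norm_num)
    have : (3 * p : ℤ) < 2 ^ p := by exact_mod_cast Nat.three_mul_lt_two_pow hp5
    simp only [pow_zero, pow_one]
    linarith
  · have hpy : (p : ℤ) < 2 ^ p ^ (j + 1) := by
      exact_mod_cast (Nat.le_self_pow j.succ_ne_zero p).trans_lt Nat.lt_two_pow_self
    generalize (2 : ℤ) ^ p ^ (j + 1) = y at hpy ⊢
    have : y ^ 2 ≤ y ^ p := pow_le_pow_right₀ (by omega) hp.two_le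
    nlinarith

theorem dvd_two_pow_sub_one_of_dvd_eval_cyclotomic (h : (p : ℤ) ∣ (cyclotomic n ℤ).eval 2) :
    p ∣ 2 ^ n - 1 := by
  have := h.trans (eval_dvd (x := (2 : ℤ)) (cyclotomic.dvd_X_pow_sub_one n ℤ))
  rw [← Int.natCast_dvd_natCast]
  push_cast [Nat.one_le_two_pow]
  simpa using this

theorem natAbs_eval_cyclotomic_eq_of_forall_prime_dvd (hp : p.Prime) (hodd : Odd p)
    (hpn : p ∣ n) (hn : n ≠ 0) (h : (p : ℤ) ∣ (cyclotomic n ℤ).eval a)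
    (hall : ∀ q : ℕ, q.Prime → (q : ℤ) ∣ (cyclotomic n ℤ).eval a → q ∣ n) :
    ((cyclotomic n ℤ).eval a).natAbs = p := by
  simp only [Int.natCast_dvd] at h hall
  refine (Nat.eq_of_dvd_of_div_eq_one h (Nat.eq_one_iff_not_exists_prime_dvd.2 ?_)).symm
  intro q hq hq_dvd
  have hqΦ := hq_dvd.trans (Nat.div_dvd_of_dvd h)
  obtain rfl : q = p := by
    by_contra hqp
    have := lt_of_dvd_of_dvd_eval_cyclotomic hp hq (hall q hq hqΦ) hqp hn (Int.natCast_dvd.2 h)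
    have := lt_of_dvd_of_dvd_eval_cyclotomic hq hp hpn (Ne.symm hqp) hn (Int.natCast_dvd.2 hqΦ)
    omega
  refine not_sq_dvd_eval_cyclotomic hq hodd hpn hn (Int.natCast_dvd.2 h) ?_
  rw [sq, ← Nat.cast_mul, Int.natCast_dvd]
  exact Nat.mul_dvd_of_dvd_div h hq_dvd

theorem exists_prime_dvd_eval_two_cyclotomic_not_dvd (hn : 2 ≤ n) (hn6 : n ≠ 6) :
    ∃ p : ℕ, p.Prime ∧ (p : ℤ) ∣ (cyclotomic n ℤ).eval 2 ∧ ¬p ∣ n := by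
  by_contra! hall
  have hΦ : 1 < ((cyclotomic n ℤ).eval 2).natAbs := by
    simpa using sub_one_lt_natAbs_cyclotomic_eval (n := n) (q := 2) (by omega) (by norm_num)
  obtain ⟨p, hp, hpΦ⟩ := Nat.exists_prime_and_dvd hΦ.ne'
  rw [← Int.natCast_dvd] at hpΦ
  have hpn : p ∣ n := hall p hp hpΦ
  have hodd : Odd p := hp.eq_two_or_odd'.resolve_left fun hp2 => by
    subst hp2
    have := dvd_two_pow_sub_one_of_dvd_eval_cyclotomic hpΦ
    have : 2 ∣ 2 ^ n := dvd_pow_self 2 (by omega)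
    have := Nat.one_le_two_pow (n := n)
    omega
  have hlt := prime_lt_eval_two_cyclotomic hp hpn (by omega) hn6 hpΦ
  rw [← Int.natAbs_of_nonneg (cyclotomic_pos' n one_lt_two).le,
    natAbs_eval_cyclotomic_eq_of_forall_prime_dvd hp hodd hpn (by omega) hpΦ hall] at hlt
  exact lt_irrefl _ hlt

end

theorem exists_prime_one_mod_dvd_mersenne (n : ℕ) (hn : 2 ≤ n) (hn6 : n ≠ 6) :
    ∃ p : ℕ, p.Prime ∧ p % n = 1 ∧ p ∣ 2 ^ n - 1 := by
  obtain ⟨p, hp, hpΦ, hpn⟩ := exists_prime_dvd_eval_two_cyclotomic_not_dvd hn hn6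
  have hordCompl : ordCompl[p] n = n := by simp [Nat.factorization_eq_zero_of_not_dvd hpn]
  have hnp : n ∣ p - 1 :=
    hordCompl ▸ ordCompl_dvd_sub_one_of_dvd_eval_cyclotomic hp (by omega) hpΦ
  refine ⟨p, hp, ?_, dvd_two_pow_sub_one_of_dvd_eval_cyclotomic hpΦ⟩
  rw [← (Nat.modEq_iff_dvd' hp.one_le).2 hnp, Nat.mod_eq_of_lt hn]
end
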